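/- arXiv:1806.02296 — 2 statements merged into one kernel-verified Lean document; each statement's English description precedes it below -/
import Mathlib

section
/- Let f : ℝ^N → ℝ^N be differentiable and locally homogeneous at x, and let ρ(x) = (1/2) xᵀ(x − f(x)). Then ∇ρ(x) = x − f(x) holds if and only if the Jacobian Jf(x) satisfies (Jf(x))ᵀ x = (Jf(x)) x. In particular, if Jf(x) is symmetric then ∇ρ(x) = x − f(x). -/
/-!
Differentiating `ε ↦ f ((1 + ε) • x)` at `0` turns local homogeneity into Euler's identity
`Jf(x) x = f x`. The product rule gives `∇ρ(x) = x - ½ (f x + Jf(x)ᵀ x)`, which therefore equals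
`x - f x` exactly when `Jf(x)ᵀ x = f x = Jf(x) x`.
-/

open Filter Topology
open scoped RealInnerProductSpace

theorem HasFDerivAt.apply_self_eq_of_eventually_homogeneous {E F : Type*}
    [NormedAddCommGroup E] [NormedSpace ℝ E] [NormedAddCommGroup F] [NormedSpace ℝ F]
    {f : E → F} {J : E →L[ℝ] F} {x : E} (hf : HasFDerivAt f J x)
    (hhom : ∀ᶠ ε in 𝓝 (0 : ℝ), f ((1 + ε) • x) = (1 + ε) • f x) :
    J x = f x := by
  have hline : HasDerivAt (fun ε : ℝ => (1 + ε) • x) x 0 := by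
    simpa using ((hasDerivAt_id (0 : ℝ)).const_add 1).smul_const x
  have hcomp : HasDerivAt (fun ε : ℝ => f ((1 + ε) • x)) (J x) 0 :=
    (by simpa using hf : HasFDerivAt f J ((1 + (0 : ℝ)) • x)).comp_hasDerivAt 0 hline
  have hscale : HasDerivAt (fun ε : ℝ => (1 + ε) • f x) (f x) 0 := by
    simpa using ((hasDerivAt_id (0 : ℝ)).const_add 1).smul_const (f x)
  exact hcomp.unique (hscale.congr_of_eventuallyEq hhom)

theorem HasFDerivAt.hasGradientAt_half_inner_self_sub {E : Type*}
    [NormedAddCommGroup E] [InnerProductSpace ℝ E] [CompleteSpace E]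
    {f : E → E} {J : E →L[ℝ] E} {x : E} (hf : HasFDerivAt f J x) :
    HasGradientAt (fun z => (1 / 2 : ℝ) * ⟪z, z - f z⟫)
      (x - (1 / 2 : ℝ) • (f x + ContinuousLinearMap.adjoint J x)) x := by
  rw [hasGradientAt_iff_hasFDerivAt]
  refine ((((hasFDerivAt_id x).inner ℝ ((hasFDerivAt_id x).sub hf)).const_mul (1 / 2 : ℝ))
    |>.congr_fderiv ?_)
  ext v
  simp only [InnerProductSpace.toDual_apply_apply, smul_apply,
    ContinuousLinearMap.comp_apply, ContinuousLinearMap.prod_apply,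
    ContinuousLinearMap.id_apply, sub_apply, id_eq, Pi.sub_apply, fderivInnerCLM_apply,
    smul_eq_mul, inner_sub_left, inner_sub_right, inner_add_left, real_inner_smul_left,
    ContinuousLinearMap.adjoint_inner_left, real_inner_comm x v, real_inner_comm (f x) v]
  ring

theorem stmt_2 {N : ℕ} (f : EuclideanSpace ℝ (Fin N) → EuclideanSpace ℝ (Fin N))
    (x : EuclideanSpace ℝ (Fin N))
    (hd : DifferentiableAt ℝ f x)
    (δ : ℝ) (hδ : 0 < δ)
    (hLH : ∀ ε : ℝ, |ε| < δ → f ((1 + ε) • x) = (1 + ε) • f x) :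
    (gradient (fun z => (1/2 : ℝ) * (inner ℝ z (z - f z) : ℝ)) x = x - f x
      ↔ (ContinuousLinearMap.adjoint (fderiv ℝ f x)) x = (fderiv ℝ f x) x)
    ∧ (ContinuousLinearMap.adjoint (fderiv ℝ f x) = fderiv ℝ f x →
        gradient (fun z => (1/2 : ℝ) * (inner ℝ z (z - f z) : ℝ)) x = x - f x) := by
  have hhom : ∀ᶠ ε in 𝓝 (0 : ℝ), f ((1 + ε) • x) = (1 + ε) • f x := by
    filter_upwards [Metric.ball_mem_nhds (0 : ℝ) hδ] with ε hε
    exact hLH ε (by simpa [Real.dist_eq] using hε)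
  have heuler : fderiv ℝ f x x = f x :=
    hd.hasFDerivAt.apply_self_eq_of_eventually_homogeneous hhom
  have key : gradient (fun z => (1/2 : ℝ) * (inner ℝ z (z - f z) : ℝ)) x = x - f x
      ↔ (ContinuousLinearMap.adjoint (fderiv ℝ f x)) x = (fderiv ℝ f x) x := by
    rw [hd.hasFDerivAt.hasGradientAt_half_inner_self_sub.gradient, heuler, sub_right_inj]
    constructor
    · intro h
      linear_combination (norm := module) 2 • h
    · intro h
      rw [h]
      module
  exact ⟨key, fun h => key.mpr (by rw [h])⟩
end

section
/- Let ℓ : ℝ^N → ℝ be proper, convex, and lower semicontinuous, let f : ℝ^N → ℝ^N be nonexpansive, let λ > 0 and L > 1, and define T(x) = prox_{ℓ/(λL)}((1/L)(f(x) − (1−L)x)). Then T is α-averaged with α = max{2/(1+L), 2/3}. -/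
/-!
The map `x ↦ (1/L) • (f x - (1 - L) • x) = (1/L) • f x + (1 - 1/L) • x` is `1/L`-averaged by
definition, and a proximal map of a convex function is firmly nonexpansive, i.e. `1/2`-averaged.
Writing `α`-averagedness as
`‖P x - P y‖² + (1-α)/α ‖(I - P) x - (I - P) y‖² ≤ ‖x - y‖²`, the composition of two
`κ`-averaged maps is `2κ/(1+κ)`-averaged because `‖a + b‖² ≤ 2‖a‖² + 2‖b‖²`.
With `κ = max (1/L) (1/2)` this is `max (2/(1+L)) (2/3)`.
-/

open scoped RealInnerProductSpace
open Set Filter Topology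

/-- An operator `P` is `α`-averaged if `P = α B + (1-α) I` for some nonexpansive `B`. -/
def IsAveraged {N : ℕ} (α : ℝ) (P : EuclideanSpace ℝ (Fin N) → EuclideanSpace ℝ (Fin N)) : Prop :=
  ∃ B : EuclideanSpace ℝ (Fin N) → EuclideanSpace ℝ (Fin N),
    LipschitzWith 1 B ∧ ∀ x, P x = α • B x + (1 - α) • x

section InnerProductSpace

variable {E : Type*} [NormedAddCommGroup E] [InnerProductSpace ℝ E]

theorem norm_sub_inv_smul_sq_sub_norm_sq {α : ℝ} (hα : α ≠ 0) (u r : E) :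
    ‖u - α⁻¹ • r‖ ^ 2 - ‖u‖ ^ 2 = α⁻¹ * (‖u - r‖ ^ 2 + (1 - α) / α * ‖r‖ ^ 2 - ‖u‖ ^ 2) := by
  rw [norm_sub_sq_real, norm_sub_sq_real, real_inner_smul_right, norm_smul, Real.norm_eq_abs,
    mul_pow, sq_abs]
  field_simp
  ring

def IsProx (g : E → ℝ) (p : E → E) : Prop :=
  ∀ v z, g (p v) + 1 / 2 * ‖p v - v‖ ^ 2 ≤ g z + 1 / 2 * ‖z - v‖ ^ 2

variable {g : E → ℝ} {p : E → E}

theorem ConvexOn.inner_sub_le_of_isProx (hg : ConvexOn ℝ univ g) (hp : IsProx g p) (v z : E) :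
    ⟪v - p v, z - p v⟫ ≤ g z - g (p v) := by
  set m := p v
  set D := g z - g m - ⟪v - m, z - m⟫
  -- compare `m` with `m + t • (z - m)`, divide by `t` and let `t → 0⁺`
  have hstep : ∀ t ∈ Ioc (0 : ℝ) 1, 0 ≤ D + t * (1 / 2 * ‖z - m‖ ^ 2) := by
    rintro t ⟨ht0, ht1⟩
    have hconv : g (m + t • (z - m)) ≤ (1 - t) * g m + t * g z := by
      have := hg.2 (mem_univ m) (mem_univ z) (sub_nonneg.2 ht1) ht0.le (sub_add_cancel 1 t)
      rwa [show (1 - t) • m + t • z = m + t • (z - m) by module] at this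
    have hnorm : ‖m + t • (z - m) - v‖ ^ 2
        = ‖m - v‖ ^ 2 - 2 * t * ⟪v - m, z - m⟫ + t ^ 2 * ‖z - m‖ ^ 2 := by
      rw [show m + t • (z - m) - v = -(v - m) + t • (z - m) by abel, norm_add_sq_real,
        inner_neg_left, real_inner_smul_right, norm_neg, norm_smul, Real.norm_eq_abs, mul_pow,
        sq_abs, ← norm_neg (v - m), neg_sub]
      ring
    have := hp v (m + t • (z - m))
    rw [hnorm] at this
    nlinarith
  have hlim : Tendsto (fun t : ℝ => D + t * (1 / 2 * ‖z - m‖ ^ 2)) (𝓝[>] 0) (𝓝 D) := by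
    have : Continuous (fun t : ℝ => D + t * (1 / 2 * ‖z - m‖ ^ 2)) := by fun_prop
    simpa using (this.tendsto 0).mono_left nhdsWithin_le_nhds
  have := ge_of_tendsto hlim (eventually_of_mem (Ioc_mem_nhdsGT one_pos) hstep)
  linarith

theorem ConvexOn.norm_sub_sq_le_inner_of_isProx (hg : ConvexOn ℝ univ g) (hp : IsProx g p)
    (u v : E) : ‖p u - p v‖ ^ 2 ≤ ⟪u - v, p u - p v⟫ := by
  have hu := hg.inner_sub_le_of_isProx hp u (p v)
  have hv := hg.inner_sub_le_of_isProx hp v (p u)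
  have : ⟪u - p u, p v - p u⟫ + ⟪v - p v, p u - p v⟫ = ‖p u - p v‖ ^ 2 - ⟪u - v, p u - p v⟫ := by
    rw [← real_inner_self_eq_norm_sq, ← neg_sub (p u) (p v), inner_neg_right, neg_add_eq_sub,
      ← inner_sub_left, ← inner_sub_left]
    congr 1; abel
  linarith

end InnerProductSpace

section Averaged

variable {N : ℕ} {α β : ℝ} {P P₁ P₂ : EuclideanSpace ℝ (Fin N) → EuclideanSpace ℝ (Fin N)}

theorem isAveraged_iff_lipschitzWith (hα : α ≠ 0) :
    IsAveraged α P ↔ LipschitzWith 1 (fun x => x - α⁻¹ • (x - P x)) := by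
  have hB : ∀ x b, P x = α • b + (1 - α) • x ↔ b = x - α⁻¹ • (x - P x) := by
    intro x b
    constructor <;> intro h <;> rw [h] <;> match_scalars <;> field_simp <;> ring
  constructor
  · rintro ⟨B, hBlip, hP⟩
    convert hBlip using 1
    funext x
    exact ((hB x (B x)).1 (hP x)).symm
  · exact fun h => ⟨_, h, fun x => (hB x _).2 rfl⟩

theorem isAveraged_iff_norm_sq (hα : 0 < α) :
    IsAveraged α P ↔ ∀ x y,
      ‖P x - P y‖ ^ 2 + (1 - α) / α * ‖(x - P x) - (y - P y)‖ ^ 2 ≤ ‖x - y‖ ^ 2 := by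
  rw [isAveraged_iff_lipschitzWith hα.ne', lipschitzWith_iff_norm_sub_le]
  refine forall₂_congr fun x y => ?_
  have hdiff : x - α⁻¹ • (x - P x) - (y - α⁻¹ • (y - P y))
      = (x - y) - α⁻¹ • ((x - P x) - (y - P y)) := by module
  have hPdiff : P x - P y = (x - y) - ((x - P x) - (y - P y)) := by abel
  have hid := norm_sub_inv_smul_sq_sub_norm_sq hα.ne' (x - y) ((x - P x) - (y - P y))
  rw [hdiff, NNReal.coe_one, one_mul, hPdiff, ← sq_le_sq₀ (norm_nonneg _) (norm_nonneg _),
    ← sub_nonpos, hid, ← mul_zero α⁻¹, mul_le_mul_iff_of_pos_left (inv_pos.2 hα), sub_nonpos]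

theorem IsAveraged.mono (h : IsAveraged α P) (hα : 0 < α) (hαβ : α ≤ β) : IsAveraged β P := by
  have hβ : 0 < β := hα.trans_le hαβ
  have hc : (1 - β) / β ≤ (1 - α) / α := by
    rw [div_le_div_iff₀ hβ hα]; nlinarith
  rw [isAveraged_iff_norm_sq hα] at h
  rw [isAveraged_iff_norm_sq hβ]
  intro x y
  nlinarith [h x y, mul_le_mul_of_nonneg_right hc (sq_nonneg ‖(x - P x) - (y - P y)‖)]

theorem IsAveraged.comp_of_same {κ : ℝ} (h₁ : IsAveraged κ P₁) (h₂ : IsAveraged κ P₂)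
    (hκ0 : 0 < κ) (hκ1 : κ ≤ 1) : IsAveraged (2 * κ / (1 + κ)) (P₂ ∘ P₁) := by
  rw [isAveraged_iff_norm_sq hκ0] at h₁ h₂
  rw [isAveraged_iff_norm_sq (by positivity)]
  intro x y
  have hc' : (1 - 2 * κ / (1 + κ)) / (2 * κ / (1 + κ)) = (1 - κ) / κ / 2 := by
    field_simp; ring
  set c := (1 - κ) / κ
  have hc : 0 ≤ c := div_nonneg (sub_nonneg.2 hκ1) hκ0.le
  set a := (x - P₁ x) - (y - P₁ y)
  set b := (P₁ x - P₂ (P₁ x)) - (P₁ y - P₂ (P₁ y))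
  have hab : (x - (P₂ ∘ P₁) x) - (y - (P₂ ∘ P₁) y) = a + b := by
    simp only [Function.comp, a, b]; abel
  have hpar : ‖a + b‖ ^ 2 ≤ 2 * ‖a‖ ^ 2 + 2 * ‖b‖ ^ 2 := by
    nlinarith [parallelogram_law_with_norm ℝ a b, sq_nonneg ‖a - b‖]
  rw [hc', hab, Function.comp_apply, Function.comp_apply]
  nlinarith [h₁ x y, h₂ (P₁ x) (P₁ y), mul_le_mul_of_nonneg_left hpar hc]

theorem IsAveraged.comp {α₁ α₂ : ℝ} (h₁ : IsAveraged α₁ P₁) (h₂ : IsAveraged α₂ P₂)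
    (hα₁ : 0 < α₁) (hα₂ : 0 < α₂) (hmax : max α₁ α₂ ≤ 1) :
    IsAveraged (2 / (1 + 1 / max α₁ α₂)) (P₂ ∘ P₁) := by
  have hκ : 0 < max α₁ α₂ := lt_max_of_lt_left hα₁
  rw [show 2 / (1 + 1 / max α₁ α₂) = 2 * max α₁ α₂ / (1 + max α₁ α₂) by field_simp; ring]
  exact (h₁.mono hα₁ (le_max_left _ _)).comp_of_same (h₂.mono hα₂ (le_max_right _ _)) hκ hmax

end Averaged

theorem ConvexOn.isAveraged_half_of_isProx {N : ℕ} {g : EuclideanSpace ℝ (Fin N) → ℝ}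
    {p : EuclideanSpace ℝ (Fin N) → EuclideanSpace ℝ (Fin N)} (hg : ConvexOn ℝ univ g)
    (hp : IsProx g p) : IsAveraged (1 / 2) p := by
  rw [isAveraged_iff_norm_sq one_half_pos]
  intro u v
  have hfirm := hg.norm_sub_sq_le_inner_of_isProx hp u v
  rw [show u - p u - (v - p v) = (u - v) - (p u - p v) by abel,
    norm_sub_sq_real (u - v)]
  norm_num
  linarith

theorem stmt_14_general {N : ℕ} (ℓ : EuclideanSpace ℝ (Fin N) → ℝ)
    (hconv : ConvexOn ℝ Set.univ ℓ)
    (f : EuclideanSpace ℝ (Fin N) → EuclideanSpace ℝ (Fin N))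
    (hf : LipschitzWith 1 f)
    (lam L : ℝ) (hlam : 0 < lam) (hL : 1 < L)
    (p : EuclideanSpace ℝ (Fin N) → EuclideanSpace ℝ (Fin N))
    (hp : ∀ v z, (lam * L)⁻¹ * ℓ (p v) + (1/2) * ‖p v - v‖^2
                  ≤ (lam * L)⁻¹ * ℓ z + (1/2) * ‖z - v‖^2)
    (T : EuclideanSpace ℝ (Fin N) → EuclideanSpace ℝ (Fin N))
    (hT : ∀ x, T x = p ((1 / L) • (f x - (1 - L) • x))) :
    IsAveraged (max (2 / (1 + L)) (2 / 3)) T := by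
  have hL0 : 0 < L := one_pos.trans hL
  have hprox : IsAveraged (1 / 2) p :=
    (hconv.smul (inv_nonneg.2 (mul_pos hlam hL0).le)).isAveraged_half_of_isProx hp
  have hstep : IsAveraged (1 / L) (fun x => (1 / L) • (f x - (1 - L) • x)) :=
    ⟨f, hf, fun x => by match_scalars <;> field_simp; ring⟩
  have hcomp := hstep.comp hprox (by positivity) one_half_pos
    (max_le ((div_le_one hL0).2 hL.le) one_half_lt_one.le)
  have hα : 2 / (1 + 1 / max (1 / L) (1 / 2)) = max (2 / (1 + L)) (2 / 3) := by
    rcases le_total L 2 with hL2 | hL2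
    · rw [max_eq_left (by gcongr), max_eq_left (by gcongr; linarith)]
      field_simp
    · rw [max_eq_right (by gcongr), max_eq_right (by gcongr; linarith)]
      norm_num
  rwa [hα, show p ∘ _ = T from funext fun x => (hT x).symm] at hcomp

theorem stmt_14 {N : ℕ} (ℓ : EuclideanSpace ℝ (Fin N) → ℝ)
    (hconv : ConvexOn ℝ Set.univ ℓ) (hlsc : LowerSemicontinuous ℓ)
    (f : EuclideanSpace ℝ (Fin N) → EuclideanSpace ℝ (Fin N))
    (hf : LipschitzWith 1 f)
    (lam L : ℝ) (hlam : 0 < lam) (hL : 1 < L)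
    (p : EuclideanSpace ℝ (Fin N) → EuclideanSpace ℝ (Fin N))
    (hp : ∀ v z, (lam * L)⁻¹ * ℓ (p v) + (1/2) * ‖p v - v‖^2
                  ≤ (lam * L)⁻¹ * ℓ z + (1/2) * ‖z - v‖^2)
    (T : EuclideanSpace ℝ (Fin N) → EuclideanSpace ℝ (Fin N))
    (hT : ∀ x, T x = p ((1 / L) • (f x - (1 - L) • x))) :
    IsAveraged (max (2 / (1 + L)) (2 / 3)) T :=
  stmt_14_general ℓ hconv f hf lam L hlam hL p hp T hT
end
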